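/- Let G be a q×q real symmetric positive definite matrix and R a q×p real matrix such that RᵀR and RᵀGR are invertible. Then (RᵀGR)⁻¹RᵀG²R(RᵀGR)⁻¹ − (RᵀR)⁻¹ is positive semidefinite; consequently λmax[(RᵀGR)⁻¹RᵀG²R(RᵀGR)⁻¹] ≥ λmax[(RᵀR)⁻¹]. -/

import Mathlib

/-!
Put `C = G R (RᵀGR)⁻¹`. Then `Rᵀ C = 1` and `Cᵀ C = (RᵀGR)⁻¹RᵀG²R(RᵀGR)⁻¹`, using `Gᵀ = G`.
For any `C` with `Rᵀ C = 1`, the matrix `D = C - R (RᵀR)⁻¹` satisfies `Rᵀ D = 0`, hence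
`Cᵀ C = (RᵀR)⁻¹ + Dᵀ D`. The eigenvalue bound follows because the largest eigenvalue is monotone in
the Loewner order: if `A ≤ B`, then `A ≤ B ≤ λmax(B) • 1`, so every eigenvalue of `A` is at most
`λmax(B)`.
-/

open Matrix

/-- The largest eigenvalue of a real square matrix (for the symmetric matrices
considered here the set of eigenvalues is finite and nonempty, and `sSup`
yields its maximum). -/
noncomputable def lmax {m : ℕ} (A : Matrix (Fin m) (Fin m) ℝ) : ℝ :=
  sSup {r : ℝ | ∃ v : Fin m → ℝ, v ≠ 0 ∧ A.mulVec v = r • v}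

open scoped MatrixOrder

theorem Matrix.mem_spectrum_iff_exists_mulVec_eq_smul {n K : Type*} [Fintype n] [DecidableEq n]
    [Field K] {A : Matrix n n K} {r : K} :
    r ∈ spectrum K A ↔ ∃ v : n → K, v ≠ 0 ∧ A *ᵥ v = r • v := by
  rw [← spectrum_toLin', ← Module.End.hasEigenvalue_iff_mem_spectrum]
  constructor
  · intro h
    obtain ⟨v, hv, hv0⟩ := h.exists_hasEigenvector
    exact ⟨v, hv0, by simpa using Module.End.mem_eigenspace_iff.mp hv⟩
  · rintro ⟨v, hv0, hv⟩
    exact Module.End.hasEigenvalue_of_hasEigenvector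
      ⟨Module.End.mem_eigenspace_iff.mpr (by simpa using hv), hv0⟩

theorem lmax_eq_sSup_spectrum {m : ℕ} (A : Matrix (Fin m) (Fin m) ℝ) :
    lmax A = sSup (spectrum ℝ A) := by
  unfold lmax
  congr 1
  ext r
  exact mem_spectrum_iff_exists_mulVec_eq_smul.symm

theorem le_algebraMap_lmax {m : ℕ} {B : Matrix (Fin m) (Fin m) ℝ} (hB : B.IsHermitian) :
    B ≤ algebraMap ℝ _ (lmax B) :=
  le_algebraMap_of_spectrum_le
    (fun _ hx => lmax_eq_sSup_spectrum B ▸ le_csSup (finite_spectrum B).bddAbove hx)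
    hB.isSelfAdjoint

theorem lmax_mono {m : ℕ} {A B : Matrix (Fin m) (Fin m) ℝ} (hA : A.IsHermitian) (hAB : A ≤ B) :
    lmax A ≤ lmax B := by
  rcases isEmpty_or_nonempty (Fin m) with _ | _
  · rw [Subsingleton.elim A B]
  have hB : B.IsHermitian := add_sub_cancel A B ▸ hA.add (le_iff.mp hAB).isHermitian
  rw [lmax_eq_sSup_spectrum A]
  exact csSup_le (ContinuousFunctionalCalculus.spectrum_nonempty A hA.isSelfAdjoint)
    ((le_algebraMap_iff_spectrum_le hA.isSelfAdjoint).mp (hAB.trans (le_algebraMap_lmax hB)))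

theorem Matrix.transpose_mul_self_sub_inv_eq {α m n : Type*} [CommRing α] [Fintype m] [Fintype n]
    [DecidableEq n] {R C : Matrix m n α} (hR : IsUnit (Rᵀ * R).det) (hRC : Rᵀ * C = 1) :
    Cᵀ * C - (Rᵀ * R)⁻¹ = (C - R * (Rᵀ * R)⁻¹)ᵀ * (C - R * (Rᵀ * R)⁻¹) := by
  set W := (Rᵀ * R)⁻¹
  have hW : Wᵀ = W := by rw [transpose_nonsing_inv, transpose_mul, transpose_transpose]
  have hCR : Cᵀ * R = 1 := by simpa using congrArg transpose hRC
  have hWRR : W * (Rᵀ * R) = 1 := nonsing_inv_mul _ hR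
  rw [transpose_sub, transpose_mul, hW]
  simp only [Matrix.sub_mul, Matrix.mul_sub, Matrix.mul_assoc, hRC]
  simp only [← Matrix.mul_assoc, hCR, hWRR, Matrix.one_mul, Matrix.mul_one]
  abel

theorem Matrix.posSemidef_transpose_mul_self_sub_inv {m n : Type*} [Fintype m] [Fintype n]
    [DecidableEq n] {R C : Matrix m n ℝ} (hR : IsUnit (Rᵀ * R).det) (hRC : Rᵀ * C = 1) :
    (Cᵀ * C - (Rᵀ * R)⁻¹).PosSemidef := by
  rw [transpose_mul_self_sub_inv_eq hR hRC]
  exact posSemidef_conjTranspose_mul_self _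

/-- For `G ≻ 0` and `R : q × p` with `RᵀR`, `RᵀGR` invertible,
`(RᵀGR)⁻¹RᵀG²R(RᵀGR)⁻¹ − (RᵀR)⁻¹` is psd, and consequently
`λmax[(RᵀGR)⁻¹RᵀG²R(RᵀGR)⁻¹] ≥ λmax[(RᵀR)⁻¹]`. -/
theorem bias_component_bound (q p : ℕ)
    (G : Matrix (Fin q) (Fin q) ℝ) (hG : G.PosDef)
    (R : Matrix (Fin q) (Fin p) ℝ)
    (hRR : IsUnit (Rᵀ * R).det) (hRGR : IsUnit (Rᵀ * G * R).det) :
    ((Rᵀ * G * R)⁻¹ * (Rᵀ * G * G * R) * (Rᵀ * G * R)⁻¹ - (Rᵀ * R)⁻¹).PosSemidef ∧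
    lmax ((Rᵀ * R)⁻¹) ≤ lmax ((Rᵀ * G * R)⁻¹ * (Rᵀ * G * G * R) * (Rᵀ * G * R)⁻¹) := by
  have hGt : Gᵀ = G := hG.isHermitian
  have hX : (Rᵀ * G * R)⁻¹ᵀ = (Rᵀ * G * R)⁻¹ := by
    rw [transpose_nonsing_inv, transpose_mul, transpose_mul, transpose_transpose, hGt,
      Matrix.mul_assoc]
  have hRC : Rᵀ * (G * R * (Rᵀ * G * R)⁻¹) = 1 := by
    rw [← Matrix.mul_assoc, ← Matrix.mul_assoc]
    exact mul_nonsing_inv _ hRGR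
  have hCC : (G * R * (Rᵀ * G * R)⁻¹)ᵀ * (G * R * (Rᵀ * G * R)⁻¹) =
      (Rᵀ * G * R)⁻¹ * (Rᵀ * G * G * R) * (Rᵀ * G * R)⁻¹ := by
    rw [transpose_mul, transpose_mul, hX, hGt]
    simp only [Matrix.mul_assoc]
  have hpsd := hCC ▸ posSemidef_transpose_mul_self_sub_inv hRR hRC
  exact ⟨hpsd, lmax_mono (isHermitian_conjTranspose_mul_self R).inv hpsd⟩
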